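/- Positivity of the flat-bottom implicit–explicit layer-averaged kinetic scheme: under the CFL condition Δt ≤ (1/2) Δx_i / ( |u_{α,i}| + √(2 g h_i) ) for all α and i, the updated kinetic densities satisfy M⁺_{α,i}(ξ) ≥ 0 for all α = 1,…,N, all i ∈ ℤ and all ξ ∈ ℝ. -/

import Mathlib

/-! The explicit upwind step is, on the support of each Maxwellian, a convex combination of
neighbouring cell values, because the CFL condition bounds `σ_i |ξ|` there; hence `M* ≥ 0`.
The implicit step exchanges mass between layers through upwinded interface fluxes, and no mass
can flow into a layer with negative density: summed over the layers where `M⁺ < 0`, the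
interface fluxes telescope to a nonnegative total (conservation), which contradicts
`∑ M⁺ < 0 ≤ ∑ M*`. -/

open Finset

/-- The kinetic Maxwellian `M̄(h,u,ξ) = (1/(gπ))·max(2gh − (ξ−u)², 0)^{1/2}`. -/
noncomputable def Mbar (g h u ξ : ℝ) : ℝ :=
  Real.sqrt (max (2 * g * h - (ξ - u) ^ 2) 0) / (g * Real.pi)

lemma Mbar_nonneg {g : ℝ} (hg : 0 ≤ g) (h u ξ : ℝ) : 0 ≤ Mbar g h u ξ :=
  div_nonneg (Real.sqrt_nonneg _) (by positivity)

lemma abs_le_of_Mbar_ne_zero {g h u ξ : ℝ} (hM : Mbar g h u ξ ≠ 0) :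
    |ξ| ≤ |u| + Real.sqrt (2 * g * h) := by
  have hsupp : (ξ - u) ^ 2 < 2 * g * h := by
    by_contra! hle
    exact hM (by rw [Mbar, max_eq_right (by linarith), Real.sqrt_zero, zero_div])
  have hdev : |ξ - u| < Real.sqrt (2 * g * h) := by
    rwa [Real.lt_sqrt (abs_nonneg _), sq_abs]
  linarith [abs_sub_abs_le_abs_sub ξ u]

lemma div_mul_abs_le_one_of_Mbar_ne_zero {g h u ξ Δt Δx : ℝ} (hΔt : 0 ≤ Δt) (hΔx : 0 < Δx)
    (hCFL : (|u| + Real.sqrt (2 * g * h)) * Δt ≤ Δx) (hM : Mbar g h u ξ ≠ 0) :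
    Δt / Δx * |ξ| ≤ 1 := by
  rw [div_mul_eq_mul_div, div_le_one hΔx]
  nlinarith [abs_le_of_Mbar_ne_zero hM]

lemma sub_mul_sub_nonneg {t a b : ℝ} (ht : 0 ≤ t) (ha : 0 ≤ a) (hb : 0 ≤ b)
    (htb : b ≠ 0 → t ≤ 1) : 0 ≤ b - t * (b - a) := by
  rcases eq_or_ne b 0 with rfl | hb0
  · nlinarith
  · nlinarith [htb hb0]

/-- One upwind step at a cell with left, centre and right values `a`, `b`, `c`. -/
lemma upwind_update_nonneg {s ξ a b c : ℝ} (hs : 0 ≤ s) (ha : 0 ≤ a) (hb : 0 ≤ b) (hc : 0 ≤ c)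
    (hCFL : b ≠ 0 → s * |ξ| ≤ 1) :
    0 ≤ b - s * ξ * ((if 0 < ξ then b else c) - (if 0 < ξ then a else b)) := by
  split_ifs with hξ
  · rw [abs_of_pos hξ] at hCFL
    exact sub_mul_sub_nonneg (by positivity) ha hb hCFL
  · rw [abs_of_nonpos (not_lt.mp hξ)] at hCFL
    have := sub_mul_sub_nonneg (t := s * -ξ) (mul_nonneg hs (by linarith)) hc hb hCFL
    linarith

lemma sum_sub_sum_pred_nonneg {P : Finset ℕ} (hP : 0 ∉ P) {n : ℕ → ℝ}
    (hout : ∀ β ∈ P, β + 1 ∉ P → 0 ≤ n β) (hin : ∀ β ∉ P, β + 1 ∈ P → n β ≤ 0) :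
    0 ≤ ∑ β ∈ P, n β - ∑ β ∈ P, n (β - 1) := by
  classical
  set Q := P.image (· - 1)
  have hmemQ : ∀ γ, γ ∈ Q ↔ γ + 1 ∈ P := fun γ => by
    refine ⟨?_, fun h => mem_image.mpr ⟨γ + 1, h, rfl⟩⟩
    intro hγ
    obtain ⟨β, hβ, rfl⟩ := mem_image.mp hγ
    rwa [Nat.sub_add_cancel (Nat.pos_of_ne_zero (ne_of_mem_of_not_mem hβ hP))]
  have hpred : ∑ β ∈ P, n (β - 1) = ∑ γ ∈ Q, n γ := by
    refine (sum_image fun β hβ β' hβ' hββ' => ?_).symm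
    have := Nat.pos_of_ne_zero (ne_of_mem_of_not_mem hβ hP)
    have := Nat.pos_of_ne_zero (ne_of_mem_of_not_mem hβ' hP)
    omega
  rw [hpred, ← sum_sdiff_sub_sum_sdiff, sub_nonneg]
  calc ∑ γ ∈ Q \ P, n γ ≤ 0 := sum_nonpos fun γ hγ => by
          rw [mem_sdiff, hmemQ] at hγ; exact hin γ hγ.2 hγ.1
    _ ≤ ∑ β ∈ P \ Q, n β := sum_nonneg fun β hβ => by
          rw [mem_sdiff, hmemQ] at hβ; exact hout β hβ.1 hβ.2

lemma nonneg_of_conservative_update {N : ℕ} {m mstar n : ℕ → ℝ} {Δt : ℝ} (hΔt : 0 ≤ Δt)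
    (hmstar : ∀ β ∈ Icc 1 N, 0 ≤ mstar β)
    (hm : ∀ β ∈ Icc 1 N, m β = mstar β + Δt * (n β - n (β - 1)))
    (hn0 : n 0 = 0) (hnN : n N = 0)
    (hout : ∀ β ∈ Icc 1 (N - 1), m β < 0 → 0 ≤ m (β + 1) → 0 ≤ n β)
    (hin : ∀ β ∈ Icc 1 (N - 1), 0 ≤ m β → m (β + 1) < 0 → n β ≤ 0) :
    ∀ β ∈ Icc 1 N, 0 ≤ m β := by
  classical
  by_contra! ⟨α, hα, hmα⟩
  set P := (Icc 1 N).filter (m · < 0)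
  have hP : ∀ β, β ∈ P ↔ β ∈ Icc 1 N ∧ m β < 0 := fun β => mem_filter
  have hflux : 0 ≤ ∑ β ∈ P, n β - ∑ β ∈ P, n (β - 1) := by
    refine sum_sub_sum_pred_nonneg (by simp [hP]) (fun β hβ hβ1 => ?_) (fun β hβ hβ1 => ?_)
    · rw [hP, mem_Icc] at hβ hβ1
      rcases eq_or_lt_of_le hβ.1.2 with rfl | hβN
      · exact hnN.ge
      · exact hout β (mem_Icc.mpr ⟨hβ.1.1, by omega⟩) hβ.2
          (not_lt.mp fun h => hβ1 ⟨⟨by omega, by omega⟩, h⟩)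
    · rw [hP, mem_Icc] at hβ hβ1
      rcases Nat.eq_zero_or_pos β with rfl | hβ0
      · exact hn0.le
      · exact hin β (mem_Icc.mpr ⟨hβ0, by omega⟩)
          (not_lt.mp fun h => hβ ⟨⟨hβ0, by omega⟩, h⟩) hβ1.2
  have hsum : ∑ β ∈ P, m β = ∑ β ∈ P, mstar β + Δt * (∑ β ∈ P, n β - ∑ β ∈ P, n (β - 1)) := by
    rw [sum_congr rfl fun β hβ => hm β ((hP β).mp hβ).1, sum_add_distrib, ← mul_sum,
      sum_sub_distrib]
  have hneg : ∑ β ∈ P, m β < 0 := sum_neg (fun β hβ => ((hP β).mp hβ).2) ⟨α, (hP α).mpr ⟨hα, hmα⟩⟩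
  have hmass : 0 ≤ ∑ β ∈ P, mstar β := sum_nonneg fun β hβ => hmstar β ((hP β).mp hβ).1
  nlinarith

lemma upwind_flux_nonneg {G H x y lx ly : ℝ} (hH : 0 ≤ H) (hx : x ≤ 0) (hy : 0 ≤ y)
    (hlx : 0 ≤ lx) (hly : 0 ≤ ly) : 0 ≤ G / H * (if G ≤ 0 then x / lx else y / ly) := by
  split_ifs with hG
  · exact mul_nonneg_of_nonpos_of_nonpos (div_nonpos_of_nonpos_of_nonneg hG hH)
      (div_nonpos_of_nonpos_of_nonneg hx hlx)
  · exact mul_nonneg (div_nonneg (not_le.mp hG).le hH) (div_nonneg hy hly)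

lemma upwind_flux_nonpos {G H x y lx ly : ℝ} (hH : 0 ≤ H) (hx : 0 ≤ x) (hy : y ≤ 0)
    (hlx : 0 ≤ lx) (hly : 0 ≤ ly) : G / H * (if G ≤ 0 then x / lx else y / ly) ≤ 0 := by
  split_ifs with hG
  · exact mul_nonpos_of_nonpos_of_nonneg (div_nonpos_of_nonpos_of_nonneg hG hH)
      (div_nonneg hx hlx)
  · exact mul_nonpos_of_nonneg_of_nonpos (div_nonneg (not_le.mp hG).le hH)
      (div_nonpos_of_nonpos_of_nonneg hy hly)

/-- The index `α` of `G` and `Nk` stands for the interface `α+1/2`. -/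
theorem flat_bottom_scheme_positivity_general
    (g : ℝ) (hg : 0 < g)
    (N : ℕ)
    (l : ℕ → ℝ) (hl : ∀ α ∈ Icc 1 N, 0 < l α)
    (Δt : ℝ) (hΔt : 0 < Δt)
    (Δx : ℤ → ℝ) (hΔx : ∀ i, 0 < Δx i)
    (σ : ℤ → ℝ) (hσ : ∀ i, σ i = Δt / Δx i)
    (h : ℤ → ℝ)
    (u : ℕ → ℤ → ℝ)
    (M : ℕ → ℤ → ℝ → ℝ)
    (hM : ∀ (α : ℕ) (i : ℤ) (ξ : ℝ), M α i ξ = l α * Mbar g (h i) (u α i) ξ)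
    (Mhalf : ℕ → ℤ → ℝ → ℝ)
    (hMhalf : ∀ (α : ℕ) (i : ℤ) (ξ : ℝ),
      Mhalf α i ξ = if 0 < ξ then M α i ξ else M α (i + 1) ξ)
    (Mstar : ℕ → ℤ → ℝ → ℝ)
    (hMstar : ∀ (α : ℕ) (i : ℤ) (ξ : ℝ),
      Mstar α i ξ = M α i ξ - σ i * ξ * (Mhalf α i ξ - Mhalf α (i - 1) ξ))
    (hnew : ℤ → ℝ)
    (G : ℕ → ℤ → ℝ)
    (Mplus Nk : ℕ → ℤ → ℝ → ℝ)
    (hNk0 : ∀ i ξ, Nk 0 i ξ = 0) (hNkN : ∀ i ξ, Nk N i ξ = 0)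
    (hNk : ∀ α ∈ Icc 1 (N - 1), ∀ (i : ℤ) (ξ : ℝ),
      Nk α i ξ = G α i / hnew i *
        (if G α i ≤ 0 then Mplus α i ξ / l α else Mplus (α + 1) i ξ / l (α + 1)))
    (hMplus : ∀ α ∈ Icc 1 N, ∀ (i : ℤ) (ξ : ℝ),
      Mplus α i ξ =
        if 0 < hnew i then Mstar α i ξ + Δt * (Nk α i ξ - Nk (α - 1) i ξ) else 0)
    (CFL : ∀ α ∈ Icc 1 N, ∀ i : ℤ,
      (|u α i| + Real.sqrt (2 * g * h i)) * Δt ≤ Δx i / 2) :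
    ∀ α ∈ Icc 1 N, ∀ (i : ℤ) (ξ : ℝ), 0 ≤ Mplus α i ξ := by
  intro α hα i ξ
  have hM_nonneg : ∀ β ∈ Icc 1 N, ∀ j, 0 ≤ M β j ξ := fun β hβ j => by
    rw [hM]; exact mul_nonneg (hl β hβ).le (Mbar_nonneg hg.le _ _ _)
  have hMstar_nonneg : ∀ β ∈ Icc 1 N, 0 ≤ Mstar β i ξ := fun β hβ => by
    have hCFL : M β i ξ ≠ 0 → σ i * |ξ| ≤ 1 := fun hMβ => by
      rw [hM] at hMβ; rw [hσ]
      exact div_mul_abs_le_one_of_Mbar_ne_zero hΔt.le (hΔx i)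
        (by linarith [CFL β hβ i, hΔx i]) (right_ne_zero_of_mul hMβ)
    rw [hMstar, hMhalf, hMhalf, sub_add_cancel]
    exact upwind_update_nonneg (by rw [hσ]; exact (div_pos hΔt (hΔx i)).le)
      (hM_nonneg β hβ _) (hM_nonneg β hβ _) (hM_nonneg β hβ _) hCFL
  by_cases hpos : 0 < hnew i
  swap
  · rw [hMplus α hα, if_neg hpos]
  have hl_succ : ∀ β ∈ Icc 1 (N - 1), 0 ≤ l β ∧ 0 ≤ l (β + 1) := fun β hβ => by
    rw [mem_Icc] at hβ
    exact ⟨(hl β (mem_Icc.mpr ⟨hβ.1, by omega⟩)).le,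
      (hl (β + 1) (mem_Icc.mpr ⟨by omega, by omega⟩)).le⟩
  refine nonneg_of_conservative_update (m := (Mplus · i ξ)) (n := (Nk · i ξ)) hΔt.le
    hMstar_nonneg (fun β hβ => by rw [hMplus β hβ, if_pos hpos]) (hNk0 i ξ) (hNkN i ξ)
    (fun β hβ hneg hnonneg => ?_) (fun β hβ hnonneg hneg => ?_) α hα
  · rw [hNk β hβ]
    exact upwind_flux_nonneg hpos.le hneg.le hnonneg (hl_succ β hβ).1 (hl_succ β hβ).2
  · rw [hNk β hβ]
    exact upwind_flux_nonpos hpos.le hnonneg hneg.le (hl_succ β hβ).1 (hl_succ β hβ).2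

/-- Positivity of the flat-bottom implicit–explicit layer-averaged kinetic scheme:
under the CFL condition `Δt ≤ (1/2)Δx_i/(|u_{α,i}| + √(2gh_i))` (written in the
equivalent product form `(|u_{α,i}| + √(2gh_i))·Δt ≤ Δx_i/2`), the updated kinetic
densities of the implicit–explicit scheme satisfy `M⁺_{α,i}(ξ) ≥ 0` for all layers
`α = 1,…,N`, all cells `i ∈ ℤ` and all `ξ ∈ ℝ`. The index `α` of `G`, `Nk` stands
for the interface `α+1/2` (so `G 0 = G N = 0`, `Nk 0 = Nk N = 0`). -/
theorem flat_bottom_scheme_positivity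
    (g : ℝ) (hg : 0 < g)
    (N : ℕ) (hN : 1 ≤ N)
    (l : ℕ → ℝ) (hl : ∀ α ∈ Icc 1 N, 0 < l α) (hlsum : ∑ α ∈ Icc 1 N, l α = 1)
    (Δt : ℝ) (hΔt : 0 < Δt)
    (Δx : ℤ → ℝ) (hΔx : ∀ i, 0 < Δx i)
    (σ : ℤ → ℝ) (hσ : ∀ i, σ i = Δt / Δx i)
    (h : ℤ → ℝ) (hh : ∀ i, 0 ≤ h i)
    (u : ℕ → ℤ → ℝ)
    (M : ℕ → ℤ → ℝ → ℝ)
    (hM : ∀ (α : ℕ) (i : ℤ) (ξ : ℝ), M α i ξ = l α * Mbar g (h i) (u α i) ξ)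
    (Mhalf : ℕ → ℤ → ℝ → ℝ)
    (hMhalf : ∀ (α : ℕ) (i : ℤ) (ξ : ℝ),
      Mhalf α i ξ = if 0 < ξ then M α i ξ else M α (i + 1) ξ)
    (Mstar : ℕ → ℤ → ℝ → ℝ)
    (hMstar : ∀ (α : ℕ) (i : ℤ) (ξ : ℝ),
      Mstar α i ξ = M α i ξ - σ i * ξ * (Mhalf α i ξ - Mhalf α (i - 1) ξ))
    (hnew : ℤ → ℝ)
    (hhnew : ∀ i : ℤ, hnew i = ∑ α ∈ Icc 1 N, ∫ ξ : ℝ, Mstar α i ξ)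
    (G : ℕ → ℤ → ℝ)
    (hG0 : ∀ i, G 0 i = 0) (hGN : ∀ i, G N i = 0)
    (hG : ∀ α ∈ Icc 1 (N - 1), ∀ i : ℤ,
      Δx i * G α i =
        ∑ j ∈ Icc 1 α,
          ((∫ ξ : ℝ, ξ * (Mhalf j i ξ - Mhalf j (i - 1) ξ))
            - l j * ∑ p ∈ Icc 1 N, ∫ ξ : ℝ, ξ * (Mhalf p i ξ - Mhalf p (i - 1) ξ)))
    (Mplus Nk : ℕ → ℤ → ℝ → ℝ)
    (hNk0 : ∀ i ξ, Nk 0 i ξ = 0) (hNkN : ∀ i ξ, Nk N i ξ = 0)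
    (hNk : ∀ α ∈ Icc 1 (N - 1), ∀ (i : ℤ) (ξ : ℝ),
      Nk α i ξ = G α i / hnew i *
        (if G α i ≤ 0 then Mplus α i ξ / l α else Mplus (α + 1) i ξ / l (α + 1)))
    (hMplus : ∀ α ∈ Icc 1 N, ∀ (i : ℤ) (ξ : ℝ),
      Mplus α i ξ =
        if 0 < hnew i then Mstar α i ξ + Δt * (Nk α i ξ - Nk (α - 1) i ξ) else 0)
    (CFL : ∀ α ∈ Icc 1 N, ∀ i : ℤ,
      (|u α i| + Real.sqrt (2 * g * h i)) * Δt ≤ Δx i / 2) :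
    ∀ α ∈ Icc 1 N, ∀ (i : ℤ) (ξ : ℝ), 0 ≤ Mplus α i ξ :=
  flat_bottom_scheme_positivity_general g hg N l hl Δt hΔt Δx hΔx σ hσ h u M hM Mhalf hMhalf Mstar
    hMstar hnew G Mplus Nk hNk0 hNkN hNk hMplus CFL
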